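/- For every n ≥ 7 with n ≡ 3 (mod 4), the decycling number of the cube of the n-cycle equals (n+3)/2: ∇(Cₙ³) = (n+3)/2. -/

import Mathlib

open SimpleGraph

/-- `S` is a decycling set of `G` if the subgraph of `G` induced on the complement of `S`
is acyclic. -/
def SimpleGraph.IsDecyclingSet {V : Type*} (G : SimpleGraph V) (S : Set V) : Prop :=
  (G.induce Sᶜ).IsAcyclic

/-- The decycling number `∇(G)` of `G`: the minimum cardinality of a decycling set of `G`. -/
noncomputable def SimpleGraph.decyclingNumber {V : Type*} (G : SimpleGraph V) : ℕ :=
  sInf {k | ∃ S : Set V, G.IsDecyclingSet S ∧ S.ncard = k}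

/-- The cube `Cₙ³` of the `n`-cycle: vertex set `ZMod n`, with `i` adjacent to `j` iff
`i ≠ j` and `i - j ≡ ±1`, `±2`, or `±3 (mod n)`. -/
def cycleCube (n : ℕ) : SimpleGraph (ZMod n) where
  Adj i j := i ≠ j ∧ (i - j = 1 ∨ j - i = 1 ∨ i - j = 2 ∨ j - i = 2 ∨ i - j = 3 ∨ j - i = 3)
  symm := ⟨by intro i j ⟨h, hd⟩; exact ⟨h.symm, by tauto⟩⟩
  loopless := ⟨by intro i ⟨h, _⟩; exact h rfl⟩

open Finset

/-!
A set `K` induces a forest exactly when its complement is a decycling set, so `∇(Cₙ³) = n - max #K`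
over such `K`. Write `n = 4m + 3`. The vertices `0, 1, 4, 5, …, 4m - 4, 4m - 3` induce a path, so
`max #K ≥ 2m`.

Conversely, let `K` induce a forest and let `g v` be the gap from `v ∈ K` to the next element of
`K` around `ℤ/n`; the gaps sum to at most `n`. A triangle is a cycle, so two consecutive gaps sum
to at least `4`; in particular a gap `1` is followed by a gap `≥ 3`. If all gaps were `≤ 3`, the
edges from each `v` to its successor would be `#K` distinct edges, too many for a forest, so some
gap is `≥ 4`. Counting gives `2 #K + 1 ≤ n`. In the equality case the gaps `1` are matched
bijectively with the gaps `≥ 3`, there is a gap `2` because `n ≡ 3 (mod 4)`, and a gap `2` can then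
only be followed by a gap `2`; as `2` generates `ℤ/n`, this makes `K` everything.
-/

namespace SimpleGraph

variable {V : Type*} {G : SimpleGraph V}

theorem isAcyclic_hasse (α : Type*) [LinearOrder α] : (hasse α).IsAcyclic := by
  classical
  intro v c hc
  obtain ⟨u, hu, hmax⟩ := c.support.toFinset.exists_max_image id ⟨v, by simp⟩
  rw [List.mem_toFinset] at hu
  set c' := c.rotate u hu
  have hc' : c'.IsCycle := hc.rotate hu
  have hnil : ¬ c'.Nil := hc'.not_nil
  have covBy_of_adj : ∀ w ∈ c'.support, (hasse α).Adj w u → w ⋖ u := fun w hw hadj =>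
    ((hasse_adj).1 hadj).resolve_right fun h =>
      h.lt.not_ge (hmax w (by simpa [c'] using (c.mem_support_rotate_iff u hu).1 hw))
  exact hc'.snd_ne_penultimate <| CovBy.unique_left
    (covBy_of_adj _ (c'.getVert_mem_support 1) (c'.adj_snd hnil).symm)
    (covBy_of_adj _ (c'.getVert_mem_support _) (c'.adj_penultimate hnil))

theorem IsAcyclic.card_edgeSet_lt [Finite V] [Nonempty V] (h : G.IsAcyclic) :
    Nat.card G.edgeSet < Nat.card V := by
  obtain ⟨T, hGT, -, hT⟩ := connected_top.exists_isTree_le_of_le_of_isAcyclic le_top h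
  have hT_card := (isTree_iff_connected_and_card.1 hT).2
  have := Set.ncard_le_ncard (edgeSet_mono hGT) (Set.toFinite _)
  simp only [Nat.card_coe_set_eq] at hT_card ⊢
  omega

theorem decyclingNumber_eq_card_sub_ncard [Finite V] (K : Set V) (hK : (G.induce K).IsAcyclic)
    (hmax : ∀ K' : Set V, (G.induce K').IsAcyclic → K'.ncard ≤ K.ncard) :
    G.decyclingNumber = Nat.card V - K.ncard := by
  have hcompl (S : Set V) := Set.ncard_add_ncard_compl S
  refine le_antisymm (Nat.sInf_le ⟨Kᶜ, by rwa [IsDecyclingSet, compl_compl], by grind⟩) ?_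
  refine le_csInf ⟨_, Kᶜ, by rwa [IsDecyclingSet, compl_compl], rfl⟩ ?_
  rintro _ ⟨S, hS, rfl⟩
  have := hmax Sᶜ hS
  grind

end SimpleGraph

namespace ZMod

theorem forall_mem_of_add_two_mem {n : ℕ} (hn : Odd n) {S : Set (ZMod n)} {x : ZMod n}
    (hx : x ∈ S) (hS : ∀ y ∈ S, y + 2 ∈ S) (z : ZMod n) : z ∈ S := by
  have : NeZero n := ⟨by rintro rfl; simp at hn⟩
  have hiter (k : ℕ) : x + 2 * k ∈ S := by
    induction k with
    | zero => simpa
    | succ k ih => simpa [mul_add, ← add_assoc] using hS _ ih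
  -- `2` is invertible modulo an odd `n`, with inverse `(n + 1) / 2`.
  have htwo : (2 : ZMod n) * ((n + 1) / 2 : ℕ) = 1 := by
    obtain ⟨k, rfl⟩ := hn
    rw [show (2 * k + 1 + 1) / 2 = k + 1 by omega]
    have h0 : 2 * (k : ZMod (2 * k + 1)) + 1 = 0 := by exact_mod_cast natCast_self (2 * k + 1)
    push_cast
    linear_combination h0
  simpa [← mul_assoc, htwo] using hiter ((n + 1) / 2 * (z - x).val)

theorem val_add_natCast_eq_or {n : ℕ} [NeZero n] (x : ZMod n) {c : ℕ} (hc : c < n) :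
    (x + c).val = x.val + c ∨ (x + c).val + n = x.val + c := by
  rcases lt_or_ge (x.val + c) n with h | h
  · left
    rw [val_add_of_lt (by rwa [val_natCast_of_lt hc]), val_natCast_of_lt hc]
  · right
    have := val_add_val_of_le (a := x) (b := c) (by rwa [val_natCast_of_lt hc])
    rw [val_natCast_of_lt hc] at this
    omega

section CyclicGap

variable {n : ℕ} (K : Finset (ZMod n))

noncomputable def cyclicGap (v : ZMod n) : ℕ :=
  sInf {d : ℕ | 0 < d ∧ v + d ∈ K}

noncomputable def cyclicNext (v : ZMod n) : ZMod n :=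
  v + cyclicGap K v

variable {K}

theorem exists_pos_add_mem [NeZero n] (hne : K.Nonempty) (v : ZMod n) :
    ∃ d : ℕ, 0 < d ∧ v + d ∈ K := by
  obtain ⟨w, hw⟩ := hne
  refine ⟨(w - v).val + n, by have := NeZero.pos n; omega, ?_⟩
  simpa using hw

theorem cyclicGap_pos [NeZero n] (hne : K.Nonempty) (v : ZMod n) : 0 < cyclicGap K v :=
  (Nat.sInf_mem (exists_pos_add_mem hne v)).1

theorem cyclicNext_mem [NeZero n] (hne : K.Nonempty) (v : ZMod n) : cyclicNext K v ∈ K :=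
  (Nat.sInf_mem (exists_pos_add_mem hne v)).2

theorem cyclicGap_le {v : ZMod n} {d : ℕ} (hd : 0 < d) (h : v + d ∈ K) : cyclicGap K v ≤ d :=
  Nat.sInf_le ⟨hd, h⟩

theorem eq_of_add_eq_add_of_le_cyclicGap {v v' : ZMod n} {j j' : ℕ} (hv : v ∈ K) (hv' : v' ∈ K)
    (hj : 0 < j) (hj' : 0 < j') (hjv : j ≤ cyclicGap K v) (hjv' : j' ≤ cyclicGap K v')
    (h : v + j = v' + j') : v = v' ∧ j = j' := by
  wlog hle : j ≤ j' generalizing v v' j j'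
  · exact (this hv' hv hj' hj hjv' hjv h.symm (by omega)).imp Eq.symm Eq.symm
  obtain rfl : j = j' := by
    by_contra hne
    have hmem : v' + (j' - j : ℕ) ∈ K := by
      rwa [Nat.cast_sub hle, ← add_sub_assoc, ← h, add_sub_cancel_right]
    have := cyclicGap_le (by omega) hmem
    omega
  exact ⟨add_right_cancel h, rfl⟩

theorem cyclicNext_injOn [NeZero n] (hne : K.Nonempty) : Set.InjOn (cyclicNext K) K :=
  fun _ hv _ hv' h =>
    (eq_of_add_eq_add_of_le_cyclicGap hv hv' (cyclicGap_pos hne _) (cyclicGap_pos hne _)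
      le_rfl le_rfl h).1

theorem sum_cyclicGap_le [NeZero n] : ∑ v ∈ K, cyclicGap K v ≤ n :=
  calc ∑ v ∈ K, cyclicGap K v = #(K.sigma fun v => Icc 1 (cyclicGap K v)) := by simp
    _ ≤ #(univ : Finset (ZMod n)) := by
      refine card_le_card_of_injOn (fun p => p.1 + p.2) (fun _ _ => mem_coe.2 (mem_univ _)) ?_
      rintro ⟨v, j⟩ hp ⟨v', j'⟩ hp' h
      simp only [coe_sigma, Set.mem_sigma_iff, mem_coe, mem_Icc] at hp hp'
      obtain ⟨rfl, rfl⟩ := eq_of_add_eq_add_of_le_cyclicGap hp.1 hp'.1 hp.2.1 hp'.2.1 hp.2.2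
        hp'.2.2 h
      rfl
    _ = n := by simp

end CyclicGap

end ZMod

namespace cycleCube

open ZMod

variable {n : ℕ}

theorem adj_add (hn : 4 ≤ n) (x : ZMod n) {c : ℕ} (hc0 : 0 < c) (hc3 : c ≤ 3) :
    (cycleCube n).Adj x (x + c) := by
  refine ⟨fun h => ?_, ?_⟩
  · have hc : ((c : ℕ) : ZMod n) = 0 := by simpa using h
    have := Nat.le_of_dvd hc0 ((ZMod.natCast_eq_zero_iff c n).1 hc)
    omega
  · simp only [add_sub_cancel_left]
    interval_cases c <;> simp

theorem exists_eq_add_of_adj {x y : ZMod n} (h : (cycleCube n).Adj x y) :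
    ∃ c : ℕ, 0 < c ∧ c ≤ 3 ∧ (y = x + c ∨ x = y + c) := by
  obtain ⟨-, h⟩ := h
  simp only [sub_eq_iff_eq_add'] at h
  rcases h with h | h | h | h | h | h
  exacts [⟨1, by simp [h]⟩, ⟨1, by simp [h]⟩, ⟨2, by simp [h]⟩, ⟨2, by simp [h]⟩,
    ⟨3, by simp [h]⟩, ⟨3, by simp [h]⟩]

section LowerBound

variable [NeZero n] {K : Finset (ZMod n)}

theorem four_le_cyclicGap_add_cyclicGap_cyclicNext (hn : 4 ≤ n)
    (hK : ((cycleCube n).induce K).IsAcyclic) {v : ZMod n} (hv : v ∈ K) :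
    4 ≤ cyclicGap K v + cyclicGap K (cyclicNext K v) := by
  have hne : K.Nonempty := ⟨v, hv⟩
  set w := cyclicNext K v
  have := cyclicGap_pos hne v
  have := cyclicGap_pos hne w
  have hu : cyclicNext K w = v + (cyclicGap K v + cyclicGap K w : ℕ) := by
    simp only [cyclicNext, w, Nat.cast_add, add_assoc]
  by_contra! h
  classical
  apply hK.cliqueFree le_rfl
    {⟨v, hv⟩, ⟨w, cyclicNext_mem hne v⟩, ⟨cyclicNext K w, cyclicNext_mem hne w⟩}
  rw [is3Clique_triple_iff]
  refine ⟨adj_add hn v (by omega) (by omega), ?_, adj_add hn w (by omega) (by omega)⟩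
  change (cycleCube n).Adj v (cyclicNext K w)
  rw [hu]
  exact adj_add hn v (by omega) (by omega)

theorem exists_four_le_cyclicGap (hn : 7 ≤ n) (hne : K.Nonempty)
    (hK : ((cycleCube n).induce K).IsAcyclic) : ∃ v ∈ K, 4 ≤ cyclicGap K v := by
  by_contra! h
  have : Nonempty (K : Set (ZMod n)) := hne.coe_sort
  let edge (v : (K : Set (ZMod n))) : ((cycleCube n).induce K).edgeSet :=
    ⟨s(v, ⟨cyclicNext K v, cyclicNext_mem hne v⟩),
      adj_add (by omega) v.1 (cyclicGap_pos hne v) (by have := h v v.2; omega)⟩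
  have hedge : Function.Injective edge := by
    intro v v' hvv'
    rw [Subtype.ext_iff, Sym2.eq_iff] at hvv'
    refine hvv'.elim And.left fun ⟨h1, h2⟩ => ?_
    have hv := congrArg Subtype.val h1
    have hv' := congrArg Subtype.val h2
    simp only [cyclicNext] at hv hv'
    have hzero : ((cyclicGap K v + cyclicGap K v' : ℕ) : ZMod n) = 0 := by
      push_cast
      linear_combination hv' - hv
    have := Nat.le_of_dvd (by have := cyclicGap_pos hne v; omega)
      ((ZMod.natCast_eq_zero_iff _ n).1 hzero)
    have := h v v.2
    have := h v' v'.2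
    omega
  have := Nat.card_le_card_of_injective edge hedge
  have := hK.card_edgeSet_lt
  omega

theorem mapsTo_cyclicNext_filter (hn : 4 ≤ n) (hK : ((cycleCube n).induce K).IsAcyclic) :
    Set.MapsTo (cyclicNext K) (K.filter (cyclicGap K · = 1)) (K.filter (3 ≤ cyclicGap K ·)) :=
  fun v hv => by
    obtain ⟨hvK, hv1⟩ := mem_filter.1 hv
    have := four_le_cyclicGap_add_cyclicGap_cyclicNext hn hK hvK
    exact mem_filter.2 ⟨cyclicNext_mem ⟨v, hvK⟩ v, by omega⟩

theorem card_filter_cyclicGap_eq_one_le (hn : 4 ≤ n) (hK : ((cycleCube n).induce K).IsAcyclic) :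
    #(K.filter (cyclicGap K · = 1)) ≤ #(K.filter (3 ≤ cyclicGap K ·)) := by
  rcases K.eq_empty_or_nonempty with rfl | hne
  · simp
  exact card_le_card_of_injOn _ (mapsTo_cyclicNext_filter hn hK)
    ((cyclicNext_injOn hne).mono (filter_subset _ _))

theorem add_two_mem_filter_of_card_le (hn : 4 ≤ n) (hK : ((cycleCube n).induce K).IsAcyclic)
    (hcard : #(K.filter (3 ≤ cyclicGap K ·)) ≤ #(K.filter (cyclicGap K · = 1))) {v : ZMod n}
    (hv : v ∈ K.filter (cyclicGap K · = 2)) : v + 2 ∈ K.filter (cyclicGap K · = 2) := by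
  obtain ⟨hvK, hv2⟩ := mem_filter.1 hv
  have hne : K.Nonempty := ⟨v, hvK⟩
  have := four_le_cyclicGap_add_cyclicGap_cyclicNext hn hK hvK
  have hnext : cyclicNext K v = v + 2 := by simp [cyclicNext, hv2]
  rw [← hnext]
  refine mem_filter.2 ⟨cyclicNext_mem hne v, ?_⟩
  -- by `hcard`, `cyclicNext` maps the gaps `1` onto the gaps `≥ 3`, and `v` is not a gap `1`
  by_contra hg2
  have hinj := (cyclicNext_injOn hne).mono (filter_subset (cyclicGap K · = 1) K)
  obtain ⟨a, ha, hav⟩ := surj_on_of_inj_on_of_card_le (fun a _ => cyclicNext K a)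
    (fun _ ha => mapsTo_cyclicNext_filter hn hK ha) (fun _ _ ha₁ ha₂ h => hinj ha₁ ha₂ h) hcard _
    (mem_filter.2 ⟨cyclicNext_mem hne v, by omega⟩)
  obtain rfl : a = v := cyclicNext_injOn hne (filter_subset _ _ ha) hvK hav.symm
  have := (mem_filter.1 ha).2
  omega

theorem two_mul_card_add_three_le (hn : 7 ≤ n) (h4 : n % 4 = 3)
    (hK : ((cycleCube n).induce K).IsAcyclic) : 2 * #K + 3 ≤ n := by
  rcases K.eq_empty_or_nonempty with rfl | hne
  · simp only [card_empty]
    omega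
  set A := K.filter (cyclicGap K · = 1)
  set B := K.filter (cyclicGap K · = 2)
  set E := K.filter (3 ≤ cyclicGap K ·)
  set D := K.filter (4 ≤ cyclicGap K ·)
  have hpart : #A + #B + #E = #K := by
    simp only [A, B, E, card_filter, ← sum_add_distrib, card_eq_sum_ones K]
    refine sum_congr rfl fun v _ => ?_
    have := cyclicGap_pos hne v
    split_ifs <;> omega
  have hsum : #A + 2 * #B + 3 * #E + #D ≤ n := calc
    _ = ∑ v ∈ K, ((if cyclicGap K v = 1 then 1 else 0) + 2 * (if cyclicGap K v = 2 then 1 else 0) +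
        3 * (if 3 ≤ cyclicGap K v then 1 else 0) + (if 4 ≤ cyclicGap K v then 1 else 0)) := by
      simp only [A, B, E, D, card_filter, mul_sum, sum_add_distrib]
    _ ≤ ∑ v ∈ K, cyclicGap K v := sum_le_sum fun v _ => by split_ifs <;> omega
    _ ≤ n := sum_cyclicGap_le
  have hAE : #A ≤ #E := card_filter_cyclicGap_eq_one_le (by omega) hK
  obtain ⟨d, hd⟩ := exists_four_le_cyclicGap hn hne hK
  have hD : 0 < #D := card_pos.2 ⟨d, mem_filter.2 hd⟩
  by_contra! hlt
  -- Now `n = 2 * #K + 1`, which forces `#A = #E` and, as `n % 4 = 3`, `#B` odd.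
  have hEA : #E ≤ #A := by omega
  obtain ⟨b, hb⟩ := card_pos.1 (show 0 < #B by omega)
  have hall := forall_mem_of_add_two_mem (S := B) (n := n) ⟨n / 2, by omega⟩ hb
    fun v hv => add_two_mem_filter_of_card_le (by omega) hK hEA hv
  have huniv := card_le_card (fun z _ => hall z : univ ⊆ B)
  have hBK := card_le_card (filter_subset (cyclicGap K · = 2) K)
  rw [card_univ, ZMod.card] at huniv
  omega

end LowerBound

theorem exists_isAcyclic_induce (h4 : n % 4 = 3) :
    ∃ K : Set (ZMod n), ((cycleCube n).induce K).IsAcyclic ∧ 2 * K.ncard + 3 = n := by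
  have : NeZero n := ⟨by omega⟩
  -- the vertices `0, 1, 4, 5, 8, 9, …, n - 7, n - 6` induce a path
  let K : Set (ZMod n) := {x | x.val < n - 3 ∧ x.val % 4 < 2}
  let index (x : K) : ℕ := 2 * (x.1.val / 4) + x.1.val % 4
  have hindex : Function.Injective index := fun x y h => by
    obtain ⟨-, hx⟩ := x.2
    obtain ⟨-, hy⟩ := y.2
    simp only [index] at h
    exact Subtype.ext (ZMod.val_injective n (by omega))
  refine ⟨K, (isAcyclic_hasse ℕ).comap ⟨index, fun {x y} hxy => ?_⟩ hindex, ?_⟩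
  · obtain ⟨hx, hx4⟩ := x.2
    obtain ⟨hy, hy4⟩ := y.2
    simp only [hasse_adj, Order.covBy_iff_add_one_eq, index]
    obtain ⟨c, hc0, hc3, h | h⟩ := exists_eq_add_of_adj (induce_adj.1 hxy) <;>
      rcases ZMod.val_add_natCast_eq_or _ (show c < n by omega) with hv | hv <;>
      rw [← h] at hv <;> omega
  · have hval {i : ℕ} (hi : i < n / 2 - 1) : ((4 * (i / 2) + i % 2 : ℕ) : ZMod n).val =
        4 * (i / 2) + i % 2 := ZMod.val_natCast_of_lt (by omega)
    rw [Set.ncard_eq_of_bijective (n := n / 2 - 1)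
      (fun i _ => ((4 * (i / 2) + i % 2 : ℕ) : ZMod n))]
    · omega
    · rintro x ⟨hx, hx4⟩
      refine ⟨2 * (x.val / 4) + x.val % 4, by omega, ?_⟩
      conv_rhs => rw [← ZMod.natCast_zmod_val x]
      congr 1
      omega
    · intro i hi
      exact ⟨by rw [hval hi]; omega, by rw [hval hi]; omega⟩
    · intro i j hi hj h
      have := congrArg ZMod.val h
      rw [hval hi, hval hj] at this
      omega

end cycleCube

/-- For every `n ≥ 7` with `n ≡ 3 (mod 4)`, `∇(Cₙ³) = (n+3)/2`. -/
theorem decyclingNumber_cycleCube_three_mod_four (n : ℕ) (hn : 7 ≤ n) (h4 : n % 4 = 3) :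
    (cycleCube n).decyclingNumber = (n + 3) / 2 := by
  have : NeZero n := ⟨by omega⟩
  obtain ⟨K, hK, hcard⟩ := cycleCube.exists_isAcyclic_induce h4
  have hmax (K' : Set (ZMod n)) (hK' : ((cycleCube n).induce K').IsAcyclic) :
      K'.ncard ≤ K.ncard := by
    lift K' to Finset (ZMod n) using K'.toFinite
    have := cycleCube.two_mul_card_add_three_le hn h4 hK'
    rw [Set.ncard_coe_finset]
    omega
  rw [decyclingNumber_eq_card_sub_ncard K hK hmax, Nat.card_zmod]
  omega
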